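/- Let H be a finitely generated group, and let G be a group with a surjective group homomorphism φ : G → H whose kernel is contained in the center of G (i.e., G is a central extension of H). Then every term γₙ(H) with n ≥ 2 of the lower central series of H is finitely generated if and only if every term γₙ(G) with n ≥ 2 of the lower central series of G is finitely generated. -/

import Mathlib

/-!
In a central extension a commutator `⁅a, b⁆` depends only on `φ a` and `φ b`. Hence, if `G₀ ≤ G`
and `M ≤ γₖ(G)` are finitely generated with `φ(G₀) = H` and `φ(M) = γₖ(H)`, then
`γₖ₊₁(G) = ⁅γₖ(G), G⁆ = ⁅M, G₀⁆`, so `γₖ₊₁(G)` is the normal closure of the finitely many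
commutators of generators of `M` and `G₀` together with finitely many lifts of generators of
`γₖ₊₁(H)`.

The normal closure of a finite set `X` whose image generates a normal subgroup is finitely
generated: conjugating an element of `X` by a generator of `G₀` stays in `⟨X⟩` up to a central
correction, and adjoining these finitely many corrections to `X` already gives a normal subgroup.
Induction on `k`, starting from `M = G₀`, gives one direction; the other holds because
`φ(γₖ(G)) = γₖ(H)`.
-/

open scoped commutatorElement

section

open Subgroup

theorem commutatorElement_mul_left_of_mem_center {G : Type*} [Group G] {z : G}
    (hz : z ∈ center G) (a b : G) : ⁅a * z, b⁆ = ⁅a, b⁆ := by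
  have hzb : z * b * z⁻¹ = b := by rw [← mem_center_iff.1 hz b, mul_inv_cancel_right]
  calc ⁅a * z, b⁆ = a * (z * b * z⁻¹) * a⁻¹ * b⁻¹ := by simp only [commutatorElement_def]; group
    _ = ⁅a, b⁆ := by rw [hzb, commutatorElement_def]

theorem commutatorElement_mul_right_of_mem_center {G : Type*} [Group G] {z : G}
    (hz : z ∈ center G) (a b : G) : ⁅a, b * z⁆ = ⁅a, b⁆ := by
  rw [← commutatorElement_inv, commutatorElement_mul_left_of_mem_center hz, commutatorElement_inv]

end

namespace Subgroup

variable {G H : Type*} [Group G] [Group H]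

theorem FG.map {K : Subgroup G} (hK : K.FG) (φ : G →* H) : (K.map φ).FG := by
  obtain ⟨T, hT, hTfin⟩ := (fg_iff K).1 hK
  exact (fg_iff _).2 ⟨φ '' T, by rw [← hT, MonoidHom.map_closure], hTfin.image φ⟩

theorem exists_finite_subset_map_closure_eq (φ : G →* H) {K : Subgroup G} (hK : (K.map φ).FG) :
    ∃ F ⊆ (K : Set G), F.Finite ∧ (closure F).map φ = K.map φ := by
  obtain ⟨T, hT, hTfin⟩ := (fg_iff _).1 hK
  have hlift : ∀ t : T, ∃ x ∈ K, φ x = t := fun t => by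
    have ht : (t : H) ∈ K.map φ := hT ▸ subset_closure t.2
    simpa using ht
  choose x hxK hφx using hlift
  have : Finite T := hTfin.to_subtype
  refine ⟨Set.range x, Set.range_subset_iff.2 hxK, Set.finite_range x, ?_⟩
  rw [MonoidHom.map_closure, ← hT, ← Set.range_comp]
  simp [Function.comp_def, hφx]

theorem commutator_closure_le_normalClosure (T S : Set G) :
    ⁅closure T, closure S⁆ ≤ normalClosure (Set.image2 (⁅·, ·⁆) T S) := by
  rw [← QuotientGroup.ker_mk' (normalClosure _), ← map_eq_bot_iff, map_commutator,
    MonoidHom.map_closure, MonoidHom.map_closure, commutator_eq_bot_iff_le_centralizer,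
    centralizer_closure, closure_le]
  rintro _ ⟨t, ht, rfl⟩ _ ⟨s, hs, rfl⟩
  rw [eq_comm, ← commutatorElement_eq_one_iff_mul_comm, ← map_commutatorElement,
    QuotientGroup.mk'_apply, QuotientGroup.eq_one_iff]
  exact subset_normalClosure (Set.mem_image2_of_mem ht hs)

theorem closure_le_normalizer_closure {S Y : Set G}
    (hconj : ∀ s ∈ S ∪ S⁻¹, ∀ y ∈ Y, s * y * s⁻¹ ∈ closure Y) :
    closure S ≤ normalizer (closure Y : Set G) := by
  have hgen : ∀ s ∈ S ∪ S⁻¹, ∀ k ∈ closure Y, s * k * s⁻¹ ∈ closure Y := fun s hs =>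
    (closure_le ((closure Y).comap (MulAut.conj s).toMonoidHom)).2 (hconj s hs)
  rw [le_normalizer_iff]
  intro g hg
  induction hg using closure_induction'' with
  | mem s hs => exact hgen s (.inl hs)
  | inv_mem s hs => exact hgen s⁻¹ (.inr (by simpa using hs))
  | one => simp
  | mul a b _ _ ha hb => exact fun k hk => by simpa [mul_assoc] using ha _ (hb k hk)

theorem commutator_le_commutator_of_map_le {φ : G →* H} (hker : φ.ker ≤ center G)
    {A A' B B' : Subgroup G} (hA : A.map φ ≤ A'.map φ) (hB : B.map φ ≤ B'.map φ) :
    ⁅A, B⁆ ≤ ⁅A', B'⁆ := by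
  have hdecomp : ∀ {K K' : Subgroup G}, K.map φ ≤ K'.map φ →
      ∀ x ∈ K, ∃ x' ∈ K', ∃ z ∈ center G, x = x' * z := by
    intro K K' h x hx
    obtain ⟨x', hx', e⟩ := h (mem_map_of_mem φ hx)
    exact ⟨x', hx', x'⁻¹ * x, hker (by simp [MonoidHom.mem_ker, e]), by group⟩
  rw [commutator_le]
  intro a ha b hb
  obtain ⟨a', ha', z, hz, rfl⟩ := hdecomp hA a ha
  obtain ⟨b', hb', z', hz', rfl⟩ := hdecomp hB b hb
  rw [commutatorElement_mul_left_of_mem_center hz, commutatorElement_mul_right_of_mem_center hz']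
  exact commutator_mem_commutator ha' hb'

theorem normalClosure_fg_of_central_extension {φ : G →* H} (hker : φ.ker ≤ center G)
    {S X : Set G} (hS : S.Finite) (hStop : (closure S).map φ = ⊤) (hX : X.Finite)
    (hXn : ((closure X).map φ).Normal) : (normalClosure X).FG := by
  have hlift : ∀ p : X × ↥(S ∪ S⁻¹), ∃ w ∈ closure X, φ w = φ (p.2 * p.1 * (p.2 : G)⁻¹) :=
    fun p => by simpa using hXn.conj_mem _ (mem_map_of_mem φ (subset_closure p.1.2)) (φ p.2)
  choose w hwX hφw using hlift
  set D := Set.range fun p : X × ↥(S ∪ S⁻¹) => (p.2 : G) * p.1 * (p.2 : G)⁻¹ * (w p)⁻¹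
  have hDfin : D.Finite := by
    have := hX.to_subtype
    have := (hS.union hS.inv).to_subtype
    exact Set.finite_range _
  have hDcenter : D ⊆ center G := by
    rintro _ ⟨p, rfl⟩
    exact hker (by simp [MonoidHom.mem_ker, hφw])
  have hSnorm : closure S ≤ normalizer (closure (X ∪ D) : Set G) := by
    refine closure_le_normalizer_closure fun s hs y hy => ?_
    rcases hy with hyX | hyD
    · have hw := hwX (⟨y, hyX⟩, ⟨s, hs⟩)
      have hd : s * y * s⁻¹ * (w (⟨y, hyX⟩, ⟨s, hs⟩))⁻¹ ∈ closure (X ∪ D) :=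
        subset_closure (.inr ⟨(⟨y, hyX⟩, ⟨s, hs⟩), rfl⟩)
      simpa using mul_mem hd (closure_mono Set.subset_union_left hw)
    · rw [mem_center_iff.1 (hDcenter hyD) s, mul_inv_cancel_right]
      exact subset_closure (.inr hyD)
  have hnormal : (closure (X ∪ D)).Normal := by
    rw [← normalizer_eq_top_iff, eq_top_iff, ← comap_top φ, ← hStop, comap_map_eq]
    exact sup_le hSnorm (hker.trans (center_le_normalizer _))
  have hDle : D ⊆ normalClosure X := by
    rintro _ ⟨p, rfl⟩
    exact mul_mem (normalClosure_normal.conj_mem _ (subset_normalClosure p.1.2) _)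
      (inv_mem (closure_le_normalClosure (hwX p)))
  have heq : normalClosure X = closure (X ∪ D) :=
    le_antisymm (normalClosure_le_normal (Set.subset_union_left.trans subset_closure))
      ((closure_le _).2 (Set.union_subset subset_normalClosure hDle))
  rw [heq]
  exact (fg_iff _).2 ⟨X ∪ D, rfl, hX.union hDfin⟩

theorem commutator_top_fg_of_central_extension {φ : G →* H} (hsurj : Function.Surjective φ)
    (hker : φ.ker ≤ center G) {S : Set G} (hS : S.Finite) (hStop : (closure S).map φ = ⊤)
    {Γ M : Subgroup G} [Γ.Normal] (hM : M.FG) (hMΓ : M ≤ Γ) (hmap : M.map φ = Γ.map φ)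
    (hfg : (⁅Γ, (⊤ : Subgroup G)⁆.map φ).FG) : ⁅Γ, (⊤ : Subgroup G)⁆.FG := by
  obtain ⟨T, rfl, hTfin⟩ := (fg_iff M).1 hM
  obtain ⟨F, hFΓ, hFfin, hF⟩ := exists_finite_subset_map_closure_eq φ hfg
  set X := Set.image2 (⁅·, ·⁆) T S ∪ F
  have hXΓ : X ⊆ (⁅Γ, ⊤⁆ : Subgroup G) := by
    refine Set.union_subset ?_ hFΓ
    rintro _ ⟨t, ht, s, -, rfl⟩
    exact commutator_mem_commutator (hMΓ (subset_closure ht)) (mem_top s)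
  have hmapX : (closure X).map φ = ⁅Γ, (⊤ : Subgroup G)⁆.map φ :=
    le_antisymm (map_mono ((closure_le _).2 hXΓ))
      (hF ▸ map_mono (closure_mono Set.subset_union_right))
  have heq : ⁅Γ, (⊤ : Subgroup G)⁆ = normalClosure X := by
    refine le_antisymm ?_ (normalClosure_le_normal hXΓ)
    calc ⁅Γ, (⊤ : Subgroup G)⁆ ≤ ⁅closure T, closure S⁆ :=
          commutator_le_commutator_of_map_le hker hmap.ge (hStop ▸ le_top)
      _ ≤ normalClosure (Set.image2 (⁅·, ·⁆) T S) := commutator_closure_le_normalClosure T S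
      _ ≤ normalClosure X := normalClosure_mono Set.subset_union_left
  rw [heq]
  exact normalClosure_fg_of_central_extension hker hS hStop ((hTfin.image2 _ hS).union hFfin)
    (hmapX ▸ Normal.map inferInstance φ hsurj)

theorem map_lowerCentralSeries_top_of_surjective {φ : G →* H} (hsurj : Function.Surjective φ)
    (n : ℕ) :
    ((⊤ : Subgroup G).lowerCentralSeries n).map φ = (⊤ : Subgroup H).lowerCentralSeries n := by
  rw [map_lowerCentralSeries, map_top_of_surjective φ hsurj]

end Subgroup

/-- Let `H` be a finitely generated group and `G` a central extension of `H`. Then every term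
`γₙ(H)` with `n ≥ 2` of the lower central series of `H` is finitely generated if and only if
every term `γₙ(G)` with `n ≥ 2` of the lower central series of `G` is finitely generated.
(Here `γₙ = lowerCentralSeries · (n - 1)`, since Mathlib's lower central series starts at
index `0`.) -/
theorem lowerCentralSeries_fg_iff_of_central_extension
    {G H : Type*} [Group G] [Group H] (φ : G →* H)
    (hsurj : Function.Surjective φ) (hker : φ.ker ≤ Subgroup.center G)
    (hH : Group.FG H) :
    (∀ n : ℕ, 2 ≤ n → ((⊤ : Subgroup H).lowerCentralSeries (n - 1)).FG) ↔
      (∀ n : ℕ, 2 ≤ n → ((⊤ : Subgroup G).lowerCentralSeries (n - 1)).FG) := by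
  refine ⟨fun hHlcs => ?_, fun hGlcs n hn => ?_⟩
  · have htop : (⊤ : Subgroup G).map φ = ⊤ := Subgroup.map_top_of_surjective φ hsurj
    obtain ⟨S, -, hS, hStop⟩ := Subgroup.exists_finite_subset_map_closure_eq (K := ⊤) φ
      (by rwa [htop, ← Group.fg_def])
    rw [htop] at hStop
    have hfgH : ∀ k, (((⊤ : Subgroup G).lowerCentralSeries (k + 1)).map φ).FG := fun k => by
      rw [Subgroup.map_lowerCentralSeries_top_of_surjective hsurj]
      simpa using hHlcs (k + 2) (by omega)
    have hfgG : ∀ k, ((⊤ : Subgroup G).lowerCentralSeries (k + 1)).FG := by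
      intro k
      induction k with
      | zero =>
        exact Subgroup.commutator_top_fg_of_central_extension hsurj hker hS hStop
          ((Subgroup.fg_iff _).2 ⟨S, rfl, hS⟩) le_top (hStop.trans htop.symm) (hfgH 0)
      | succ k ih =>
        exact Subgroup.commutator_top_fg_of_central_extension hsurj hker hS hStop ih le_rfl rfl
          (hfgH (k + 1))
    intro n hn
    obtain ⟨k, rfl⟩ := Nat.exists_eq_add_of_le' hn
    simpa using hfgG k
  · rw [← Subgroup.map_lowerCentralSeries_top_of_surjective hsurj]
    exact (hGlcs n hn).map φ
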